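/- With notation as in the homogenization setup: if 𝒢 is a Gröbner basis for I ⊆ K⟨X⟩ with respect to ≺_gr, then the set of normal words modulo the homogenization ideal ⟨Ĩ⟩ in K⟨X,T⟩, with respect to ≺_{T-gr}, is exactly {T^r u : u ∈ N(I), r ∈ ℕ}, where N(I) is the set of normal words modulo I in K⟨X⟩. -/

import Mathlib

open scoped Classical


/-- Words in the letters `X_1, …, X_n`: the free monoid on `Fin n`. -/
abbrev Word (n : ℕ) := FreeMonoid (Fin n)

/-- The free associative `K`-algebra `K⟨X_1,…,X_n⟩`, realised as the monoid algebra of the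
free monoid on `Fin n`. -/
abbrev FreeAlg (K : Type) [Field K] (n : ℕ) := MonoidAlgebra K (Word n)

/-- The word `v` divides the word `u` if `u = w * v * s` for some words `w, s`. -/
def WDvd {n : ℕ} (v u : Word n) : Prop := ∃ w s : Word n, u = w * v * s

/-- The monomial of `K⟨X⟩` corresponding to a word. -/
noncomputable def mono {K : Type} [Field K] {n : ℕ} (w : Word n) : FreeAlg K n :=
  MonoidAlgebra.single w 1

/-- The two-sided ideal of `K⟨X⟩` generated by a set of words (a monomial ideal). -/
noncomputable def monIdeal (K : Type) [Field K] {n : ℕ} (Ω : Set (Word n)) :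
    TwoSidedIdeal (FreeAlg K n) :=
  TwoSidedIdeal.span (mono '' Ω)

/-- A ring is semiprime if `a R a = 0` implies `a = 0`. -/
def IsSemiprimeRing (R : Type*) [Ring R] : Prop :=
  ∀ a : R, (∀ r : R, a * r * a = 0) → a = 0

/-- A ring is semiprimitive (Jacobson semisimple) if its Jacobson radical is zero. -/
def IsSemiprimitiveRing (R : Type*) [Ring R] : Prop :=
  (⊥ : TwoSidedIdeal R).jacobson = ⊥

/-- A monomial ordering on the words: a multiplication-compatible well-ordering. -/
structure MonOrder (n : ℕ) where
  /-- the strict order relation -/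
  lt : Word n → Word n → Prop
  trichotomous : ∀ u v : Word n, lt u v ∨ u = v ∨ lt v u
  trans : ∀ {u v w : Word n}, lt u v → lt v w → lt u w
  wf : WellFounded lt
  mul_compat : ∀ u v w s : Word n, lt u v → lt (w * u * s) (w * v * s)
  one_lt : ∀ u w s : Word n, w * u * s ≠ u → lt u (w * u * s)

/-- The leading monomial (word) of a nonzero element of `K⟨X⟩` with respect to a monomial
ordering: the `≺`-largest word in its support (and `1` by convention for `0`). -/
noncomputable def LM {K : Type} [Field K] {n : ℕ} (o : MonOrder n) (f : FreeAlg K n) :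
    Word n :=
  if h : ∃ w ∈ f.coeff.support, ∀ v ∈ f.coeff.support, v ≠ w → o.lt v w then h.choose else 1

/-- The weight degree of a word, where the letter `i` has weight `wt i`. -/
def wdeg {n : ℕ} (wt : Fin n → ℕ) (u : Word n) : ℕ :=
  (FreeMonoid.toList u |>.map wt).sum

/-- `f` is homogeneous of degree `p` with respect to the weight grading. -/
def IsHomogeneous {K : Type} [Field K] {n : ℕ} (wt : Fin n → ℕ) (f : FreeAlg K n)
    (p : ℕ) : Prop :=
  ∀ w ∈ f.coeff.support, wdeg wt w = p

/-- The (highest-degree) leading homogeneous component of `f` with respect to the weight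
grading. -/
noncomputable def LH {K : Type} [Field K] {n : ℕ} (wt : Fin n → ℕ) (f : FreeAlg K n) :
    FreeAlg K n :=
  MonoidAlgebra.ofCoeff (Finsupp.filter (fun w => wdeg wt w = f.coeff.support.sup (wdeg wt)) f.coeff)

/-- `𝒢` is a Gröbner basis of the two-sided ideal `I` w.r.t. the monomial ordering `o`:
`𝒢 ⊆ I ∖ {0}` and the leading monomials of `I` and of `𝒢` generate the same monomial
ideal. -/
def IsGrobnerBasis {K : Type} [Field K] {n : ℕ} (o : MonOrder n)
    (𝒢 : Set (FreeAlg K n)) (I : TwoSidedIdeal (FreeAlg K n)) : Prop :=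
  𝒢 ⊆ {f | f ∈ I ∧ f ≠ 0} ∧
    monIdeal K (LM o '' {f : FreeAlg K n | f ∈ I ∧ f ≠ 0}) = monIdeal K (LM o '' 𝒢)


/-- The embedding of words in `X_1,…,X_n` into words in `X_1,…,X_n,T`. -/
def embW {n : ℕ} : Word n →* Word (n + 1) := FreeMonoid.map Fin.castSucc

/-- The homogenization variable `T`, as a word. -/
def TW (n : ℕ) : Word (n + 1) := FreeMonoid.of (Fin.last n)

/-- The extended weight function on `X ∪ {T}`, with `d(T) = 1`. -/
def wtT {n : ℕ} (wt : Fin n → ℕ) : Fin (n + 1) → ℕ :=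
  Fin.lastCases 1 wt

/-- The non-central homogenization `f̃ ∈ K⟨X,T⟩` of `f ∈ K⟨X⟩` with respect to `T`:
each word `w` of `f` is multiplied by `T^(p - d(w))`, where `p` is the degree of `f`. -/
noncomputable def homz {K : Type} [Field K] {n : ℕ} (wt : Fin n → ℕ) (f : FreeAlg K n) :
    FreeAlg K (n + 1) :=
  f.coeff.sum fun w c =>
    MonoidAlgebra.single ((TW n) ^ (f.coeff.support.sup (wdeg wt) - wdeg wt w) * embW w) c

/-- The commutators `X_i T - T X_i`. -/
noncomputable def comms (K : Type) [Field K] (n : ℕ) : Set (FreeAlg K (n + 1)) :=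
  {c | ∃ i : Fin n,
    c = mono (FreeMonoid.of i.castSucc * TW n) - mono (TW n * FreeMonoid.of i.castSucc)}

/-- The homogenization `Ĩ = {f̃ : f ∈ I} ∪ {X_iT − TX_i}` of an ideal `I ⊆ K⟨X⟩`. -/
noncomputable def homzSet {K : Type} [Field K] {n : ℕ} (wt : Fin n → ℕ)
    (I : TwoSidedIdeal (FreeAlg K n)) : Set (FreeAlg K (n + 1)) :=
  (homz wt '' (I : Set (FreeAlg K n))) ∪ comms K n

/-!
The commutators put every word `X_i T` into `LM⟨Ĩ⟩`, so a normal word modulo `⟨Ĩ⟩` has all its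
`T`s in front, `T^r u`; and `LM(g̃) = LM(g)` puts the image of every leading word of `I` into
`LM⟨Ĩ⟩`, so `u` is normal modulo `I`.

Conversely, let `F ∈ ⟨Ĩ⟩` have leading word `T^s v` dividing `T^r u`. The algebra map
`K⟨X,T⟩ → K⟨X⟩[t]`, `T ↦ t`, `X_i ↦ X_i t^{d(X_i)}`, sends `Ĩ` into `I[t]`, so setting `T = 1`
in the component of `F` of degree `d(T^s v)` gives some `f ∈ I`. Every other word `W` of that
component satisfies `sortT W ⪯ W ≺ T^s v`, since the swaps `X_i T → T X_i` decrease words, and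
`LM(g̃) = LM(g)` for binomials `g` forces `delT W ≺ v`. Hence `LM f = v`, a factor of `u`.
-/

namespace MonOrder

variable {n : ℕ} (o : MonOrder n)

lemma asymm {u v : Word n} (h : o.lt u v) : ¬ o.lt v u := o.wf.asymmetric u v h

lemma irrefl (u : Word n) : ¬ o.lt u u := fun h => o.asymm h h

lemma exists_max (s : Finset (Word n)) (hs : s.Nonempty) :
    ∃ w ∈ s, ∀ v ∈ s, v ≠ w → o.lt v w := by
  have : IsStrictOrder (Word n) (flip o.lt) :=
    { irrefl := o.irrefl, trans := fun _ _ _ h₁ h₂ => o.trans h₂ h₁ }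
  obtain ⟨⟨w, hw⟩, -, hmax⟩ := (s.finite_toSet.wellFoundedOn (r := flip o.lt)).has_min
    Set.univ ⟨⟨_, hs.choose_spec⟩, trivial⟩
  refine ⟨w, hw, fun v hv hne => ?_⟩
  rcases o.trichotomous v w with h | rfl | h
  exacts [h, absurd rfl hne, absurd h (hmax ⟨v, hv⟩ trivial)]

end MonOrder

section LeadingMonomial

variable {K : Type} [Field K]

lemma LM_spec {n : ℕ} (o : MonOrder n) {f : FreeAlg K n} (hf : f ≠ 0) :
    LM o f ∈ f.coeff.support ∧ ∀ v ∈ f.coeff.support, v ≠ LM o f → o.lt v (LM o f) := by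
  have h := o.exists_max _ <|
    Finsupp.support_nonempty_iff.mpr (MonoidAlgebra.coeff_eq_zero.not.mpr hf)
  rw [LM, dif_pos h]
  exact h.choose_spec

lemma LM_eq_of_forall_lt {n : ℕ} (o : MonOrder n) {f : FreeAlg K n} {w : Word n}
    (hw : w ∈ f.coeff.support) (hmax : ∀ v ∈ f.coeff.support, v ≠ w → o.lt v w) :
    LM o f = w := by
  obtain ⟨hmem, hlt⟩ := LM_spec o (f := f) (by rintro rfl; simp at hw)
  by_contra hne
  exact o.asymm (hlt w hw (Ne.symm hne)) (hmax _ hmem hne)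

lemma LM_eq_of_support_subset {n : ℕ} (o : MonOrder n) {f g : FreeAlg K n} (hf : f ≠ 0)
    (hg : LM o f ∈ g.coeff.support) (hgf : g.coeff.support ⊆ f.coeff.support) :
    LM o g = LM o f :=
  LM_eq_of_forall_lt o hg fun v hv => (LM_spec o hf).2 v (hgf hv)

lemma LM_mapDomain {m n : ℕ} {o : MonOrder m} {o' : MonOrder n} {φ : Word m → Word n}
    {f : FreeAlg K m} (hf : f ≠ 0)
    (hφ : ∀ w ∈ f.coeff.support, w ≠ LM o f → o'.lt (φ w) (φ (LM o f))) :
    MonoidAlgebra.mapDomain φ f ≠ 0 ∧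
      LM o' (MonoidAlgebra.mapDomain φ f) = φ (LM o f) := by
  have hfiber : (MonoidAlgebra.mapDomain φ f).coeff (φ (LM o f)) = f.coeff (LM o f) := by
    rw [MonoidAlgebra.mapDomain, MonoidAlgebra.coeff_ofCoeff, Finsupp.mapDomain_apply_eq_sum]
    refine Finset.sum_eq_single_of_mem _ (Finset.mem_filter.mpr ⟨(LM_spec o hf).1, rfl⟩) ?_
    intro w hw hne
    have hlt := hφ w (Finset.mem_filter.mp hw).1 hne
    rw [(Finset.mem_filter.mp hw).2] at hlt
    exact absurd hlt (o'.irrefl _)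
  have hmem : φ (LM o f) ∈ (MonoidAlgebra.mapDomain φ f).coeff.support := by
    rw [Finsupp.mem_support_iff, hfiber]
    exact Finsupp.mem_support_iff.mp (LM_spec o hf).1
  refine ⟨by rintro h; simp [h] at hmem, LM_eq_of_forall_lt o' hmem fun v hv hne => ?_⟩
  obtain ⟨w, hw, rfl⟩ := Finset.mem_image.mp (Finsupp.mapDomain_support hv)
  exact hφ w hw (by rintro rfl; exact hne rfl)

end LeadingMonomial

section Words

open FreeMonoid

variable {n : ℕ}

lemma wdeg_one (wt : Fin n → ℕ) : wdeg wt 1 = 0 := rfl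

lemma wdeg_of (wt : Fin n → ℕ) (a : Fin n) : wdeg wt (of a) = wt a := by
  simp [wdeg]

lemma wdeg_mul (wt : Fin n → ℕ) (u v : Word n) : wdeg wt (u * v) = wdeg wt u + wdeg wt v := by
  simp [wdeg, toList_mul]

lemma wdeg_pow (wt : Fin n → ℕ) (u : Word n) (k : ℕ) : wdeg wt (u ^ k) = k * wdeg wt u := by
  induction k with
  | zero => simp [wdeg_one]
  | succ k ih => rw [pow_succ, wdeg_mul, ih, Nat.succ_mul]

lemma wdeg_embW (wt : Fin n → ℕ) (u : Word n) : wdeg (wtT wt) (embW u) = wdeg wt u := by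
  simp [wdeg, embW, toList_map, Function.comp_def, wtT]

lemma wdeg_TW (wt : Fin n → ℕ) : wdeg (wtT wt) (TW n) = 1 := by
  simp [TW, wdeg_of, wtT]

/-- The number of `T`s: the degree for the weights `d(T) = 1`, `d(X_i) = 0`. -/
def cntT (W : Word (n + 1)) : ℕ := wdeg (wtT 0) W

def delT : Word (n + 1) →* Word n := lift (Fin.lastCases 1 of)

lemma cntT_mul (U V : Word (n + 1)) : cntT (U * V) = cntT U + cntT V := wdeg_mul _ U V

lemma cntT_TW : cntT (TW n) = 1 := wdeg_TW 0

lemma cntT_embW (u : Word n) : cntT (embW u) = 0 := by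
  rw [cntT, wdeg_embW]
  simp [wdeg, List.sum_eq_zero]

lemma cntT_castSucc (i : Fin n) : cntT (of i.castSucc) = 0 := cntT_embW (of i)

lemma cntT_pow_mul_embW (s : ℕ) (u : Word n) : cntT (TW n ^ s * embW u) = s := by
  rw [cntT_mul, cntT, wdeg_pow, ← cntT, cntT_TW, cntT_embW, mul_one, add_zero]

lemma delT_TW : delT (TW n) = 1 := by
  simp [delT, TW]

lemma delT_castSucc (i : Fin n) : delT (of i.castSucc) = of i := by
  simp [delT]

lemma delT_embW (u : Word n) : delT (embW u) = u := by
  have : delT.comp embW = MonoidHom.id (Word n) := hom_eq fun i => delT_castSucc i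
  exact DFunLike.congr_fun this u

lemma delT_pow_mul_embW (s : ℕ) (u : Word n) : delT (TW n ^ s * embW u) = u := by
  rw [map_mul, map_pow, delT_TW, one_pow, one_mul, delT_embW]

lemma wdeg_wtT (wt : Fin n → ℕ) (W : Word (n + 1)) :
    wdeg (wtT wt) W = cntT W + wdeg wt (delT W) := by
  induction W using FreeMonoid.inductionOn' with
  | one => rfl
  | of_mul a W ih =>
    rw [wdeg_mul, cntT_mul, map_mul, wdeg_mul, ih]
    induction a using Fin.lastCases with
    | last => rw [← TW, wdeg_TW, cntT_TW, delT_TW, wdeg_one]; ring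
    | cast i =>
      rw [cntT_castSucc, delT_castSucc, wdeg_of, wdeg_of]
      simp only [wtT, Fin.lastCases_castSucc]
      ring

def sortT (W : Word (n + 1)) : Word (n + 1) := TW n ^ cntT W * embW (delT W)

def IsNF (W : Word (n + 1)) : Prop := ∃ (s : ℕ) (u : Word n), W = TW n ^ s * embW u

lemma IsNF.sortT_eq {W : Word (n + 1)} (h : IsNF W) : sortT W = W := by
  obtain ⟨s, u, rfl⟩ := h
  rw [sortT, cntT_pow_mul_embW, delT_pow_mul_embW]

lemma sortT_eq_of_delT_eq {U V : Word (n + 1)} (hc : cntT U = cntT V) (hd : delT U = delT V) :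
    sortT U = sortT V := by
  rw [sortT, sortT, hc, hd]

end Words

section NormalWords

open FreeMonoid

variable {n : ℕ}

def NoXT (a b : Fin (n + 1)) : Prop := b = Fin.last n → a = Fin.last n

lemma toList_TW_pow (s : ℕ) : toList (TW n ^ s) = List.replicate s (Fin.last n) := by
  induction s with
  | zero => rfl
  | succ s ih => rw [pow_succ, toList_mul, ih, TW, toList_of, ← List.replicate_succ']

lemma isNF_ofList_of_isChain : ∀ l : List (Fin (n + 1)), l.IsChain NoXT → IsNF (ofList l)
  | [], _ => ⟨0, 1, rfl⟩
  | a :: l, hc => by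
    rw [List.isChain_cons] at hc
    obtain ⟨s, u, hu⟩ := isNF_ofList_of_isChain l hc.2
    rw [ofList_cons, hu]
    induction a using Fin.lastCases with
    | last => exact ⟨s + 1, u, by rw [pow_succ', mul_assoc]; rfl⟩
    | cast i =>
      cases s with
      | zero => exact ⟨0, of i * u, by rw [map_mul]; rfl⟩
      | succ s =>
        have hhead : l.head? = some (Fin.last n) := by
          rw [← toList_ofList l, hu, toList_mul, toList_TW_pow, List.replicate_succ]
          rfl
        exact absurd (hc.1 _ hhead rfl) (Fin.castSucc_lt_last i).ne

lemma isNF_iff_isChain (W : Word (n + 1)) : IsNF W ↔ (toList W).IsChain NoXT := by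
  refine ⟨?_, fun h => isNF_ofList_of_isChain _ h⟩
  rintro ⟨s, u, rfl⟩
  rw [toList_mul, toList_TW_pow, List.isChain_append]
  refine ⟨List.isChain_replicate_of_rel s fun _ => rfl, ?_,
    fun a ha _ _ _ => List.eq_of_mem_replicate (List.mem_of_mem_getLast? ha)⟩
  refine List.isChain_iff_forall_rel_of_append_cons_cons.mpr fun a b l₁ l₂ hl hb => ?_
  have hmem : b ∈ toList (embW u) := by simp [hl]
  obtain ⟨j, -, hj⟩ := List.mem_map.mp hmem
  exact absurd (hj.trans hb) (Fin.castSucc_lt_last j).ne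

lemma IsNF.of_wdvd {V W : Word (n + 1)} (hW : IsNF W) (hVW : WDvd V W) : IsNF V := by
  obtain ⟨α, β, rfl⟩ := hVW
  rw [isNF_iff_isChain] at hW ⊢
  exact hW.infix ⟨toList α, toList β, by simp [toList_mul]⟩

lemma exists_XT_of_not_isNF {W : Word (n + 1)} (hW : ¬ IsNF W) :
    ∃ (i : Fin n) (α β : Word (n + 1)), W = α * (of i.castSucc * TW n) * β := by
  rw [isNF_iff_isChain, List.isChain_iff_forall_rel_of_append_cons_cons] at hW
  simp only [NoXT, not_forall] at hW
  obtain ⟨a, b, l₁, l₂, hl, hb, ha⟩ := hW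
  obtain ⟨i, rfl⟩ := Fin.exists_castSucc_eq.mpr ha
  refine ⟨i, ofList l₁, ofList l₂, ?_⟩
  rw [← ofList_toList W, hl, hb, ofList_append, ofList_cons, ofList_cons, mul_assoc, mul_assoc]
  rfl

end NormalWords

section MonomialIdeals

variable {K : Type} [Field K] {n : ℕ}

lemma WDvd.mul_left {v u : Word n} (h : WDvd v u) (w : Word n) : WDvd v (w * u) := by
  obtain ⟨a, b, rfl⟩ := h
  exact ⟨w * a, b, by simp only [mul_assoc]⟩

lemma WDvd.mul_right {v u : Word n} (h : WDvd v u) (s : Word n) : WDvd v (u * s) := by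
  obtain ⟨a, b, rfl⟩ := h
  exact ⟨a, b * s, by simp only [mul_assoc]⟩

lemma WDvd.map {m : ℕ} (φ : Word n →* Word m) {v u : Word n} (h : WDvd v u) :
    WDvd (φ v) (φ u) := by
  obtain ⟨a, b, rfl⟩ := h
  exact ⟨φ a, φ b, by simp only [map_mul]⟩

lemma mono_mul (u v : Word n) : mono (K := K) u * mono v = mono (u * v) := by
  simp [mono, MonoidAlgebra.single_mul_single]

lemma support_mono (u : Word n) : (mono (K := K) u).coeff.support = {u} :=
  Finsupp.support_single u one_ne_zero

lemma mono_mem_monIdeal_iff {Ω : Set (Word n)} {u : Word n} :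
    mono (K := K) u ∈ monIdeal K Ω ↔ ∃ v ∈ Ω, WDvd v u := by
  constructor
  · suffices ∀ f ∈ monIdeal K Ω, ∀ x ∈ f.coeff.support, ∃ v ∈ Ω, WDvd v x from
      fun hu => this _ hu u (by simp [support_mono])
    intro f hf
    induction hf using TwoSidedIdeal.span_induction with
    | mem f hf =>
      obtain ⟨v, hv, rfl⟩ := hf
      intro x hx
      rw [support_mono, Finset.mem_singleton] at hx
      exact ⟨v, hv, hx ▸ ⟨1, 1, by rw [one_mul, mul_one]⟩⟩
    | zero => simp
    | add f g _ _ hf hg =>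
      intro x hx
      rcases Finset.mem_union.mp (Finsupp.support_add hx) with h | h
      exacts [hf x h, hg x h]
    | neg f _ hf => simpa using hf
    | left_absorb a f _ hf =>
      intro x hx
      obtain ⟨y, -, z, hz, rfl⟩ :=
        Finset.mem_mul.mp (MonoidAlgebra.support_coeff_mul_subset a f hx)
      obtain ⟨v, hv, hvz⟩ := hf z hz
      exact ⟨v, hv, hvz.mul_left y⟩
    | right_absorb b f _ hf =>
      intro x hx
      obtain ⟨y, hy, z, -, rfl⟩ :=
        Finset.mem_mul.mp (MonoidAlgebra.support_coeff_mul_subset f b hx)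
      obtain ⟨v, hv, hvy⟩ := hf y hy
      exact ⟨v, hv, hvy.mul_right z⟩
  · rintro ⟨v, hv, w, s, rfl⟩
    rw [← mono_mul, ← mono_mul]
    exact TwoSidedIdeal.mul_mem_right _ _ _ <| TwoSidedIdeal.mul_mem_left _ _ _ <|
      TwoSidedIdeal.subset_span ⟨v, hv, rfl⟩

end MonomialIdeals

section Commutators

open FreeMonoid

variable {K : Type} [Field K] {n : ℕ}

lemma castSucc_mul_TW_ne (i : Fin n) : of i.castSucc * TW n ≠ TW n * of i.castSucc := by
  intro h
  have := List.head_eq_of_cons_eq (congrArg toList h)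
  exact (Fin.castSucc_lt_last i).ne this

lemma coeff_comm_TW_mul (i : Fin n) :
    (mono (K := K) (of i.castSucc * TW n) - mono (TW n * of i.castSucc)).coeff
      (TW n * of i.castSucc) = -1 := by
  simp [mono, (castSucc_mul_TW_ne i).symm]

lemma comm_ne_zero (i : Fin n) :
    mono (K := K) (of i.castSucc * TW n) - mono (TW n * of i.castSucc) ≠ 0 := by
  intro h
  simpa [h] using coeff_comm_TW_mul (K := K) i

variable (K) in
lemma TW_mul_lt_of_LM_comm {oT : MonOrder (n + 1)}
    (hLMcomm : ∀ i : Fin n, LM oT (mono (K := K) (of i.castSucc * TW n)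
        - mono (TW n * of i.castSucc)) = of i.castSucc * TW n) (i : Fin n) :
    oT.lt (TW n * of i.castSucc) (of i.castSucc * TW n) := by
  have hspec := LM_spec oT (comm_ne_zero (K := K) i)
  rw [hLMcomm i] at hspec
  refine hspec.2 _ ?_ (castSucc_mul_TW_ne i).symm
  rw [Finsupp.mem_support_iff, coeff_comm_TW_mul]
  exact neg_ne_zero.mpr one_ne_zero

lemma sortT_lt_of_not_isNF {oT : MonOrder (n + 1)}
    (hswap : ∀ i : Fin n, oT.lt (TW n * of i.castSucc) (of i.castSucc * TW n))
    {W : Word (n + 1)} (hW : ¬ IsNF W) : oT.lt (sortT W) W := by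
  induction W using oT.wf.induction with
  | _ W ih =>
  obtain ⟨i, α, β, rfl⟩ := exists_XT_of_not_isNF hW
  have hlt : oT.lt (α * (TW n * of i.castSucc) * β) (α * (of i.castSucc * TW n) * β) :=
    oT.mul_compat _ _ _ _ (hswap i)
  have hsort :
      sortT (α * (TW n * of i.castSucc) * β) = sortT (α * (of i.castSucc * TW n) * β) :=
    sortT_eq_of_delT_eq (by simp only [cntT_mul, cntT_TW, cntT_castSucc])
      (by simp only [map_mul, delT_TW, delT_castSucc, mul_one, one_mul])
  by_cases hW' : IsNF (α * (TW n * of i.castSucc) * β)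
  · rwa [← hsort, hW'.sortT_eq]
  · exact hsort ▸ oT.trans (ih _ hlt hW') hlt

end Commutators

section Homogenization

open FreeMonoid

variable {K : Type} [Field K] {n : ℕ}

lemma homz_eq_mapDomain (wt : Fin n → ℕ) (f : FreeAlg K n) :
    homz wt f = MonoidAlgebra.mapDomain
      (fun w => TW n ^ (f.coeff.support.sup (wdeg wt) - wdeg wt w) * embW w) f := by
  simp only [homz, MonoidAlgebra.mapDomain, Finsupp.mapDomain,
    MonoidAlgebra.ofCoeff_finsuppSum, MonoidAlgebra.ofCoeff_single]

lemma mem_support_homz {wt : Fin n → ℕ} {f : FreeAlg K n} {W : Word (n + 1)} :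
    W ∈ (homz wt f).coeff.support ↔ ∃ w ∈ f.coeff.support,
      TW n ^ (f.coeff.support.sup (wdeg wt) - wdeg wt w) * embW w = W := by
  have hinj : Function.Injective
      (fun w => TW n ^ (f.coeff.support.sup (wdeg wt) - wdeg wt w) * embW w) :=
    fun u v h => by simpa only [delT_pow_mul_embW] using congrArg delT h
  rw [homz_eq_mapDomain, MonoidAlgebra.mapDomain, MonoidAlgebra.coeff_ofCoeff,
    Finsupp.mapDomain_support_of_injective hinj, Finset.mem_image]

lemma mapDomain_delT_homz (wt : Fin n → ℕ) (f : FreeAlg K n) :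
    MonoidAlgebra.mapDomain delT (homz wt f) = f := by
  rw [homz_eq_mapDomain, MonoidAlgebra.mapDomain, MonoidAlgebra.mapDomain,
    MonoidAlgebra.coeff_ofCoeff, ← Finsupp.mapDomain_comp]
  convert MonoidAlgebra.ofCoeff_coeff f
  convert Finsupp.mapDomain_id
  funext w
  exact delT_pow_mul_embW _ w

lemma homz_ne_zero {wt : Fin n → ℕ} {f : FreeAlg K n} (hf : f ≠ 0) : homz wt f ≠ 0 :=
  fun h => hf (by rw [← mapDomain_delT_homz wt f, h, MonoidAlgebra.mapDomain_zero])

lemma wdeg_le_and_lt_of_LM_homz {wt : Fin n → ℕ} {o : MonOrder n} {oT : MonOrder (n + 1)}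
    {f : FreeAlg K n} (hf : f ≠ 0) (hLM : LM oT (homz wt f) = embW (LM o f))
    {w : Word n} (hw : w ∈ f.coeff.support) (hne : w ≠ LM o f) :
    wdeg wt w ≤ wdeg wt (LM o f) ∧
      oT.lt (TW n ^ (wdeg wt (LM o f) - wdeg wt w) * embW w) (embW (LM o f)) := by
  set p := f.coeff.support.sup (wdeg wt)
  have hhomz : homz wt f ≠ 0 := by
    rintro h
    simpa [h] using mem_support_homz (wt := wt).mpr ⟨w, hw, rfl⟩
  obtain ⟨hmem, hlt⟩ := LM_spec oT hhomz
  rw [hLM] at hmem hlt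
  obtain ⟨v, -, hv⟩ := mem_support_homz.mp hmem
  have hvLM : v = LM o f := by simpa only [delT_pow_mul_embW, delT_embW] using congrArg delT hv
  have hpLM : p = wdeg wt (LM o f) := by
    have := congrArg cntT hv
    rw [cntT_pow_mul_embW, cntT_embW, hvLM] at this
    exact le_antisymm (by omega) (Finset.le_sup (LM_spec o hf).1)
  refine ⟨hpLM ▸ Finset.le_sup hw, hpLM ▸ hlt _ (mem_support_homz.mpr ⟨w, hw, rfl⟩) ?_⟩
  intro h
  exact hne (by simpa only [delT_pow_mul_embW, delT_embW] using congrArg delT h)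

variable {wt : Fin n → ℕ} {o : MonOrder n} {oT : MonOrder (n + 1)}

/-- The binomial `f = x + y` has `LM f = y`, so `LM f̃ = y` compares `T^(d y - d x) x` with `y`. -/
lemma TW_pow_mul_embW_lt
    (hLMhomz : ∀ f : FreeAlg K n, f ≠ 0 → LM oT (homz wt f) = embW (LM o f))
    {x y : Word n} (hxy : o.lt x y) {a b : ℕ} (hab : a + wdeg wt x = b + wdeg wt y) :
    oT.lt (TW n ^ a * embW x) (TW n ^ b * embW y) := by
  have hxy' : x ≠ y := by rintro rfl; exact o.irrefl x hxy
  set f : FreeAlg K n := mono x + mono y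
  have hsupp : f.coeff.support = {x, y} :=
    Finsupp.support_single_add_single hxy' one_ne_zero one_ne_zero
  have hf : f ≠ 0 := by
    rintro h
    simpa [h] using congrArg (x ∈ ·) hsupp
  have hLMf : LM o f = y := LM_eq_of_forall_lt o (by simp [hsupp]) fun v hv hne => by
    rcases Finset.mem_insert.mp (hsupp ▸ hv) with rfl | hv
    exacts [hxy, absurd (Finset.mem_singleton.mp hv) hne]
  obtain ⟨hdeg, hlt⟩ := hLMf ▸
    wdeg_le_and_lt_of_LM_homz hf (hLMhomz f hf) (w := x) (by simp [hsupp]) (hLMf ▸ hxy')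
  have hpow : TW n ^ a = TW n ^ b * TW n ^ (wdeg wt y - wdeg wt x) := by
    rw [← pow_add]; congr 1; omega
  simpa only [hpow, mul_assoc, mul_one] using oT.mul_compat _ _ (TW n ^ b) 1 hlt

end Homogenization

section Dehomogenization

open FreeMonoid

variable {K : Type} [Field K] {n : ℕ} {wt : Fin n → ℕ} {o : MonOrder n}
  {oT : MonOrder (n + 1)}

/-- `sortT W ⪯ W ≺ W₀`, and the normal words `sortT W`, `W₀` of equal degree compare as
`delT W`, `delT W₀` do. -/
lemma delT_lt_delT
    (hLMhomz : ∀ f : FreeAlg K n, f ≠ 0 → LM oT (homz wt f) = embW (LM o f))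
    (hswap : ∀ i : Fin n, oT.lt (TW n * of i.castSucc) (of i.castSucc * TW n))
    {W W₀ : Word (n + 1)} (hW₀ : IsNF W₀) (hdeg : wdeg (wtT wt) W = wdeg (wtT wt) W₀)
    (hlt : oT.lt W W₀) : o.lt (delT W) (delT W₀) := by
  have hsort : oT.lt (sortT W) W₀ := by
    by_cases hW : IsNF W
    · rwa [hW.sortT_eq]
    · exact oT.trans (sortT_lt_of_not_isNF hswap hW) hlt
  rw [wdeg_wtT, wdeg_wtT] at hdeg
  rcases o.trichotomous (delT W) (delT W₀) with h | h | h
  · exact h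
  · rw [← hW₀.sortT_eq, sortT_eq_of_delT_eq (by rw [h] at hdeg; omega) h] at hsort
    exact absurd hsort (oT.irrefl _)
  · have := TW_pow_mul_embW_lt (K := K) hLMhomz h (a := cntT W₀) (b := cntT W) (by omega)
    rw [← sortT, ← sortT, hW₀.sortT_eq] at this
    exact absurd (oT.trans this hsort) (oT.irrefl _)

lemma LM_mapDomain_delT
    (hLMhomz : ∀ f : FreeAlg K n, f ≠ 0 → LM oT (homz wt f) = embW (LM o f))
    (hswap : ∀ i : Fin n, oT.lt (TW n * of i.castSucc) (of i.castSucc * TW n))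
    {F : FreeAlg K (n + 1)} (hF : F ≠ 0)
    (hhom : ∀ W ∈ F.coeff.support, wdeg (wtT wt) W = wdeg (wtT wt) (LM oT F))
    (hNF : IsNF (LM oT F)) :
    MonoidAlgebra.mapDomain delT F ≠ 0 ∧
      LM o (MonoidAlgebra.mapDomain delT F) = delT (LM oT F) :=
  LM_mapDomain hF fun W hW hne =>
    delT_lt_delT hLMhomz hswap hNF (hhom W hW) ((LM_spec oT hF).2 W hW hne)

end Dehomogenization

section GradedEvaluation

open FreeMonoid Polynomial

variable {K : Type} [Field K] {n : ℕ}

variable (K) in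
noncomputable def wordToPoly (wt : Fin n → ℕ) : Word (n + 1) →* (FreeAlg K n)[X] where
  toFun W := monomial (wdeg (wtT wt) W) (mono (delT W))
  map_one' := rfl
  map_mul' U V := by rw [monomial_mul_monomial, mono_mul, ← map_mul, wdeg_mul]

lemma wordToPoly_apply (wt : Fin n → ℕ) (W : Word (n + 1)) :
    wordToPoly K wt W = monomial (wdeg (wtT wt) W) (mono (delT W)) := rfl

variable (K) in
noncomputable def toPoly (wt : Fin n → ℕ) : FreeAlg K (n + 1) →ₐ[K] (FreeAlg K n)[X] :=
  MonoidAlgebra.lift K (FreeAlg K n)[X] (Word (n + 1)) (wordToPoly K wt)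

lemma mapDomain_eq_sum {m : ℕ} (φ : Word m → Word n) (F : FreeAlg K m) :
    MonoidAlgebra.mapDomain φ F =
      ∑ W ∈ F.coeff.support, MonoidAlgebra.single (φ W) (F.coeff W) := by
  simp only [MonoidAlgebra.mapDomain, Finsupp.mapDomain, Finsupp.sum,
    MonoidAlgebra.ofCoeff_sum, MonoidAlgebra.ofCoeff_single]

lemma toPoly_eq_sum (wt : Fin n → ℕ) (F : FreeAlg K (n + 1)) :
    toPoly K wt F = ∑ W ∈ F.coeff.support,
      monomial (wdeg (wtT wt) W) (MonoidAlgebra.single (delT W) (F.coeff W)) := by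
  rw [toPoly, MonoidAlgebra.lift_apply, Finsupp.sum]
  refine Finset.sum_congr rfl fun W _ => ?_
  simp [wordToPoly_apply, smul_monomial, mono]

noncomputable def gradedPart (wt : Fin n → ℕ) (q : ℕ) (F : FreeAlg K (n + 1)) :
    FreeAlg K (n + 1) :=
  MonoidAlgebra.ofCoeff (F.coeff.filter fun W => wdeg (wtT wt) W = q)

lemma mem_support_gradedPart {wt : Fin n → ℕ} {q : ℕ} {F : FreeAlg K (n + 1)}
    {W : Word (n + 1)} :
    W ∈ (gradedPart wt q F).coeff.support ↔ W ∈ F.coeff.support ∧ wdeg (wtT wt) W = q := by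
  rw [gradedPart, MonoidAlgebra.coeff_ofCoeff, Finsupp.support_filter, Finset.mem_filter]

lemma coeff_toPoly (wt : Fin n → ℕ) (F : FreeAlg K (n + 1)) (q : ℕ) :
    (toPoly K wt F).coeff q = MonoidAlgebra.mapDomain delT (gradedPart wt q F) := by
  rw [toPoly_eq_sum, finsetSum_coeff, mapDomain_eq_sum, gradedPart, MonoidAlgebra.coeff_ofCoeff,
    Finsupp.support_filter, Finset.sum_filter]
  refine Finset.sum_congr rfl fun W _ => ?_
  by_cases h : wdeg (wtT wt) W = q <;> simp [coeff_monomial, h]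

lemma toPoly_of_homogeneous (wt : Fin n → ℕ) {F : FreeAlg K (n + 1)} {q : ℕ}
    (hF : ∀ W ∈ F.coeff.support, wdeg (wtT wt) W = q) :
    toPoly K wt F = monomial q (MonoidAlgebra.mapDomain delT F) := by
  rw [toPoly_eq_sum, mapDomain_eq_sum, map_sum]
  exact Finset.sum_congr rfl fun W hW => by rw [hF W hW]

end GradedEvaluation

section HomogenizedIdeal

open FreeMonoid Polynomial

variable {K : Type} [Field K] {n : ℕ}

lemma toPoly_homz (wt : Fin n → ℕ) (f : FreeAlg K n) :
    toPoly K wt (homz wt f) = monomial (f.coeff.support.sup (wdeg wt)) f := by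
  refine (toPoly_of_homogeneous wt fun W hW => ?_).trans (by rw [mapDomain_delT_homz])
  obtain ⟨w, hw, rfl⟩ := mem_support_homz.mp hW
  rw [wdeg_mul, wdeg_pow, wdeg_TW, wdeg_embW, mul_one]
  have := Finset.le_sup (f := wdeg wt) hw
  omega

lemma toPoly_mono (wt : Fin n → ℕ) (W : Word (n + 1)) :
    toPoly K wt (mono W) = wordToPoly K wt W := by
  rw [toPoly, mono, MonoidAlgebra.lift_single, one_smul]

lemma toPoly_comm (wt : Fin n → ℕ) (i : Fin n) :
    toPoly K wt (mono (of i.castSucc * TW n) - mono (TW n * of i.castSucc)) = 0 := by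
  have hT : wordToPoly K wt (TW n) = X := by
    rw [wordToPoly_apply, wdeg_TW, delT_TW]
    exact monomial_one_one_eq_X
  rw [map_sub, toPoly_mono, toPoly_mono, map_mul, map_mul, hT, (commute_X _).eq, sub_self]

lemma coeff_toPoly_mem {wt : Fin n → ℕ} {I : TwoSidedIdeal (FreeAlg K n)}
    {F : FreeAlg K (n + 1)} (hF : F ∈ TwoSidedIdeal.span (homzSet wt I)) (q : ℕ) :
    (toPoly K wt F).coeff q ∈ I := by
  induction hF using TwoSidedIdeal.span_induction generalizing q with
  | mem F hF =>
    rcases hF with ⟨f, hf, rfl⟩ | ⟨i, rfl⟩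
    · rw [toPoly_homz, coeff_monomial]
      split_ifs
      exacts [hf, I.zero_mem]
    · rw [toPoly_comm, coeff_zero]
      exact I.zero_mem
  | zero => simp
  | add F G _ _ hF hG => simpa using I.add_mem (hF q) (hG q)
  | neg F _ hF => simpa using I.neg_mem (hF q)
  | left_absorb a F _ hF =>
    rw [map_mul, coeff_mul]
    exact I.finsetSum_mem _ _ fun x _ => I.mul_mem_left _ _ (hF x.2)
  | right_absorb b F _ hF =>
    rw [map_mul, coeff_mul]
    exact I.finsetSum_mem _ _ fun x _ => I.mul_mem_right _ _ (hF x.1)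

variable {wt : Fin n → ℕ} {o : MonOrder n} {oT : MonOrder (n + 1)}

lemma exists_LM_eq_delT
    (hLMhomz : ∀ f : FreeAlg K n, f ≠ 0 → LM oT (homz wt f) = embW (LM o f))
    (hswap : ∀ i : Fin n, oT.lt (TW n * of i.castSucc) (of i.castSucc * TW n))
    {I : TwoSidedIdeal (FreeAlg K n)} {F : FreeAlg K (n + 1)}
    (hFJ : F ∈ TwoSidedIdeal.span (homzSet wt I)) (hF : F ≠ 0) (hNF : IsNF (LM oT F)) :
    ∃ f ∈ I, f ≠ 0 ∧ LM o f = delT (LM oT F) := by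
  set Fq := gradedPart wt (wdeg (wtT wt) (LM oT F)) F
  have hLMmem : LM oT F ∈ Fq.coeff.support :=
    mem_support_gradedPart.mpr ⟨(LM_spec oT hF).1, rfl⟩
  have hLMq : LM oT Fq = LM oT F :=
    LM_eq_of_support_subset oT hF hLMmem fun W hW => (mem_support_gradedPart.mp hW).1
  have hFq : Fq ≠ 0 := by
    rintro h
    simp [h] at hLMmem
  obtain ⟨hne, hLM⟩ := LM_mapDomain_delT hLMhomz hswap hFq
    (fun W hW => hLMq ▸ (mem_support_gradedPart.mp hW).2) (hLMq ▸ hNF)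
  exact ⟨_, coeff_toPoly wt F _ ▸ coeff_toPoly_mem hFJ _, hne, hLMq ▸ hLM⟩

end HomogenizedIdeal

theorem normal_words_of_homogenized_general {K : Type} [Field K] {n : ℕ}
    (wt : Fin n → ℕ)
    (o : MonOrder n)
    (oT : MonOrder (n + 1))
    (hLMhomz : ∀ f : FreeAlg K n, f ≠ 0 → LM oT (homz wt f) = embW (LM o f))
    (hLMcomm : ∀ i : Fin n,
      LM oT (mono (K := K) (FreeMonoid.of i.castSucc * TW n)
        - mono (TW n * FreeMonoid.of i.castSucc)) = FreeMonoid.of i.castSucc * TW n)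
    (I : TwoSidedIdeal (FreeAlg K n)) :
    {w : Word (n + 1) |
        mono (K := K) w ∉ monIdeal K (LM oT ''
          {f : FreeAlg K (n + 1) | f ∈ TwoSidedIdeal.span (homzSet wt I) ∧ f ≠ 0})} =
      {w : Word (n + 1) | ∃ (r : ℕ) (u : Word n),
        mono (K := K) u ∉ monIdeal K (LM o '' {f : FreeAlg K n | f ∈ I ∧ f ≠ 0}) ∧
        w = (TW n) ^ r * embW u} := by
  have hswap := TW_mul_lt_of_LM_comm K hLMcomm
  ext w
  constructor
  · intro hw
    have hNF : IsNF w := by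
      by_contra h
      obtain ⟨i, α, β, rfl⟩ := exists_XT_of_not_isNF h
      exact hw <| mono_mem_monIdeal_iff.mpr ⟨_, ⟨_, ⟨TwoSidedIdeal.subset_span
        (Or.inr ⟨i, rfl⟩), comm_ne_zero i⟩, hLMcomm i⟩, α, β, rfl⟩
    obtain ⟨r, u, rfl⟩ := hNF
    refine ⟨r, u, fun hu => hw ?_, rfl⟩
    obtain ⟨_, ⟨g, ⟨hgI, hg⟩, rfl⟩, hdvd⟩ := mono_mem_monIdeal_iff.mp hu
    exact mono_mem_monIdeal_iff.mpr ⟨_, ⟨homz wt g, ⟨TwoSidedIdeal.subset_span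
      (Or.inl ⟨g, hgI, rfl⟩), homz_ne_zero hg⟩, hLMhomz g hg⟩, (hdvd.map embW).mul_left _⟩
  · rintro ⟨r, u, hu, rfl⟩ hw
    obtain ⟨_, ⟨F, ⟨hFJ, hF⟩, rfl⟩, hdvd⟩ := mono_mem_monIdeal_iff.mp hw
    have hNF : IsNF (LM oT F) := IsNF.of_wdvd ⟨r, u, rfl⟩ hdvd
    obtain ⟨f, hfI, hf, hLMf⟩ := exists_LM_eq_delT hLMhomz hswap hFJ hF hNF
    refine hu (mono_mem_monIdeal_iff.mpr ⟨_, ⟨f, ⟨hfI, hf⟩, rfl⟩, ?_⟩)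
    simpa only [hLMf, delT_pow_mul_embW] using hdvd.map delT

/-- If `𝒢` is a Gröbner basis of `I ⊆ K⟨X⟩` w.r.t. the `ℕ`-graded ordering `≺_gr`, then
the normal words modulo the homogenization ideal `⟨Ĩ⟩ ⊆ K⟨X,T⟩`, w.r.t. the extended
ordering `≺_{T-gr}`, are exactly the words `T^r u` with `u` normal modulo `I` and
`r ∈ ℕ`. -/
theorem normal_words_of_homogenized {K : Type} [Field K] {n : ℕ}
    (wt : Fin n → ℕ) (hwt : ∀ i, 0 < wt i)
    (o : MonOrder n) (hgr : ∀ u v : Word n, wdeg wt u < wdeg wt v → o.lt u v)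
    (oT : MonOrder (n + 1))
    (hgrT : ∀ u v : Word (n + 1), wdeg (wtT wt) u < wdeg (wtT wt) v → oT.lt u v)
    (hext : ∀ u v : Word n, o.lt u v ↔ oT.lt (embW u) (embW v))
    (hTsmall : ∀ i : Fin n, oT.lt (TW n) (FreeMonoid.of i.castSucc))
    (hLMhomz : ∀ f : FreeAlg K n, f ≠ 0 → LM oT (homz wt f) = embW (LM o f))
    (hLMcomm : ∀ i : Fin n,
      LM oT (mono (K := K) (FreeMonoid.of i.castSucc * TW n)
        - mono (TW n * FreeMonoid.of i.castSucc)) = FreeMonoid.of i.castSucc * TW n)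
    (I : TwoSidedIdeal (FreeAlg K n)) (𝒢 : Set (FreeAlg K n))
    (hGB : IsGrobnerBasis o 𝒢 I) :
    {w : Word (n + 1) |
        mono (K := K) w ∉ monIdeal K (LM oT ''
          {f : FreeAlg K (n + 1) | f ∈ TwoSidedIdeal.span (homzSet wt I) ∧ f ≠ 0})} =
      {w : Word (n + 1) | ∃ (r : ℕ) (u : Word n),
        mono (K := K) u ∉ monIdeal K (LM o '' {f : FreeAlg K n | f ∈ I ∧ f ≠ 0}) ∧
        w = (TW n) ^ r * embW u} :=
  normal_words_of_homogenized_general wt o oT hLMhomz hLMcomm I
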